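/- There exists a primitive embedding ι of the lattice U ⊕ U ⊕ C₈⁶ (ℤ⁶ with block-diagonal Gram matrix with blocks [[0,1],[1,0]], [[0,1],[1,0]], [[−4,1],[1,−2]]) into the K3 lattice Λ_K3 such that the orthogonal complement of ι(ℤ⁶) in Λ_K3, equipped with the restricted bilinear form, is isometric to the lattice U ⊕ A₆ ⊕ E₈ (ℤ¹⁶ with block-diagonal Gram matrix with blocks U, A₆, E₈). -/
import Mathlib


open Matrix

set_option maxHeartbeats 4000000

/-- The hyperbolic lattice `U`. -/
def U : Matrix (Fin 2) (Fin 2) ℤ := !![0, 1; 1, 0]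

/-- The root lattice `A₁` (negative definite). -/
def A1 : Matrix (Fin 1) (Fin 1) ℤ := !![-2]

/-- The root lattice `A₂` (negative definite). -/
def A2 : Matrix (Fin 2) (Fin 2) ℤ := !![-2, 1; 1, -2]

/-- The root lattice `A₆` (negative definite). -/
def A6 : Matrix (Fin 6) (Fin 6) ℤ :=
  !![-2, 1, 0, 0, 0, 0;
    1, -2, 1, 0, 0, 0;
    0, 1, -2, 1, 0, 0;
    0, 0, 1, -2, 1, 0;
    0, 0, 0, 1, -2, 1;
    0, 0, 0, 0, 1, -2]

/-- The lattice `C₈⁶` of Nishiyama's lemma. -/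
def C86 : Matrix (Fin 2) (Fin 2) ℤ := !![-4, 1; 1, -2]

/-- The root lattice `E₈` (negative of the Cartan matrix, Bourbaki numbering). -/
def E8 : Matrix (Fin 8) (Fin 8) ℤ :=
  !![-2, 0, 1, 0, 0, 0, 0, 0;
    0, -2, 0, 1, 0, 0, 0, 0;
    1, 0, -2, 1, 0, 0, 0, 0;
    0, 1, 1, -2, 1, 0, 0, 0;
    0, 0, 0, 1, -2, 1, 0, 0;
    0, 0, 0, 0, 1, -2, 1, 0;
    0, 0, 0, 0, 0, 1, -2, 1;
    0, 0, 0, 0, 0, 0, 1, -2]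

/-- The root lattice `E₇` (nodes 1–7 of `E₈` in Bourbaki numbering). -/
def E7 : Matrix (Fin 7) (Fin 7) ℤ :=
  !![-2, 0, 1, 0, 0, 0, 0;
    0, -2, 0, 1, 0, 0, 0;
    1, 0, -2, 1, 0, 0, 0;
    0, 1, 1, -2, 1, 0, 0;
    0, 0, 0, 1, -2, 1, 0;
    0, 0, 0, 0, 1, -2, 1;
    0, 0, 0, 0, 0, 1, -2]

/-- The root lattice `E₆` (nodes 1–6 of `E₈` in Bourbaki numbering). -/
def E6 : Matrix (Fin 6) (Fin 6) ℤ :=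
  !![-2, 0, 1, 0, 0, 0;
    0, -2, 0, 1, 0, 0;
    1, 0, -2, 1, 0, 0;
    0, 1, 1, -2, 1, 0;
    0, 0, 0, 1, -2, 1;
    0, 0, 0, 0, 1, -2]

/-- Block-diagonal (direct) sum of two Gram matrices. -/
def dsum {m n : ℕ} (A : Matrix (Fin m) (Fin m) ℤ) (B : Matrix (Fin n) (Fin n) ℤ) :
    Matrix (Fin (m + n)) (Fin (m + n)) ℤ :=
  Matrix.reindex finSumFinEquiv finSumFinEquiv (Matrix.fromBlocks A 0 0 B)

/-- The K3 lattice `Λ_K3 = U ⊕ U ⊕ U ⊕ E₈ ⊕ E₈`. -/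
def LambdaK3 : Matrix (Fin 22) (Fin 22) ℤ := dsum (dsum (dsum (dsum U U) U) E8) E8

/-- The lattice `U ⊕ U ⊕ C₈⁶`. -/
def UUC86 : Matrix (Fin 6) (Fin 6) ℤ := dsum (dsum U U) C86

/-- The lattice `U ⊕ A₆ ⊕ E₈`. -/
def UA6E8 : Matrix (Fin 16) (Fin 16) ℤ := dsum (dsum U A6) E8

def Mmat : Matrix (Fin 22) (Fin 6) ℤ :=
  !![1, 0, 0, 0, 0, 0;
    0, 1, 0, 0, 0, 0;
    0, 0, 1, 0, 0, 0;
    0, 0, 0, 1, 0, 0;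
    0, 0, 0, 0, 0, 0;
    0, 0, 0, 0, 0, 0;
    0, 0, 0, 0, -1, 1;
    0, 0, 0, 0, -2, 0;
    0, 0, 0, 0, -1, 0;
    0, 0, 0, 0, -2, 0;
    0, 0, 0, 0, -2, 0;
    0, 0, 0, 0, -2, 0;
    0, 0, 0, 0, -2, 0;
    0, 0, 0, 0, -1, 0;
    0, 0, 0, 0, 0, 0;
    0, 0, 0, 0, 0, 0;
    0, 0, 0, 0, 0, 0;
    0, 0, 0, 0, 0, 0;
    0, 0, 0, 0, 0, 0;
    0, 0, 0, 0, 0, 0;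
    0, 0, 0, 0, 0, 0;
    0, 0, 0, 0, 0, 0]

def Nmat : Matrix (Fin 22) (Fin 16) ℤ :=
  !![0, 0, 0, 0, 0, 0, 0, 0, 0, 0, 0, 0, 0, 0, 0, 0;
    0, 0, 0, 0, 0, 0, 0, 0, 0, 0, 0, 0, 0, 0, 0, 0;
    0, 0, 0, 0, 0, 0, 0, 0, 0, 0, 0, 0, 0, 0, 0, 0;
    0, 0, 0, 0, 0, 0, 0, 0, 0, 0, 0, 0, 0, 0, 0, 0;
    1, 0, 0, 0, 0, 0, 0, 0, 0, 0, 0, 0, 0, 0, 0, 0;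
    0, 1, 0, 0, 0, 0, 0, 0, 0, 0, 0, 0, 0, 0, 0, 0;
    0, 0, -1, -1, 0, 0, 1, 0, 0, 0, 0, 0, 0, 0, 0, 0;
    0, 0, -2, -1, 0, 0, 1, 0, 0, 0, 0, 0, 0, 0, 0, 0;
    0, 0, -2, -2, 0, 0, 2, 0, 0, 0, 0, 0, 0, 0, 0, 0;
    0, 0, -3, -3, 0, 0, 2, 0, 0, 0, 0, 0, 0, 0, 0, 0;
    0, 0, -2, -3, 0, 1, 1, 0, 0, 0, 0, 0, 0, 0, 0, 0;
    0, 0, -1, -3, 1, 0, 1, 0, 0, 0, 0, 0, 0, 0, 0, 0;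
    0, 0, 0, -2, 0, 0, 1, 0, 0, 0, 0, 0, 0, 0, 0, 0;
    0, 0, 0, -1, 0, 0, 0, 1, 0, 0, 0, 0, 0, 0, 0, 0;
    0, 0, 0, 0, 0, 0, 0, 0, 1, 0, 0, 0, 0, 0, 0, 0;
    0, 0, 0, 0, 0, 0, 0, 0, 0, 1, 0, 0, 0, 0, 0, 0;
    0, 0, 0, 0, 0, 0, 0, 0, 0, 0, 1, 0, 0, 0, 0, 0;
    0, 0, 0, 0, 0, 0, 0, 0, 0, 0, 0, 1, 0, 0, 0, 0;
    0, 0, 0, 0, 0, 0, 0, 0, 0, 0, 0, 0, 1, 0, 0, 0;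
    0, 0, 0, 0, 0, 0, 0, 0, 0, 0, 0, 0, 0, 1, 0, 0;
    0, 0, 0, 0, 0, 0, 0, 0, 0, 0, 0, 0, 0, 0, 1, 0;
    0, 0, 0, 0, 0, 0, 0, 0, 0, 0, 0, 0, 0, 0, 0, 1]

def Lmat : Matrix (Fin 6) (Fin 22) ℤ :=
  !![1, 0, 0, 0, 0, 0, 0, 0, 0, 0, 0, 0, 0, 0, 0, 0, 0, 0, 0, 0, 0, 0;
    0, 1, 0, 0, 0, 0, 0, 0, 0, 0, 0, 0, 0, 0, 0, 0, 0, 0, 0, 0, 0, 0;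
    0, 0, 1, 0, 0, 0, 0, 0, 0, 0, 0, 0, 0, 0, 0, 0, 0, 0, 0, 0, 0, 0;
    0, 0, 0, 1, 0, 0, 0, 0, 0, 0, 0, 0, 0, 0, 0, 0, 0, 0, 0, 0, 0, 0;
    0, 0, 0, 0, 0, 0, 0, 0, -1, 0, 0, 0, 0, 0, 0, 0, 0, 0, 0, 0, 0, 0;
    0, 0, 0, 0, 0, 0, 1, 0, -1, 0, 0, 0, 0, 0, 0, 0, 0, 0, 0, 0, 0, 0]

def Amat : Matrix (Fin 16) (Fin 22) ℤ :=
  !![0, 0, 0, 0, 1, 0, 0, 0, 0, 0, 0, 0, 0, 0, 0, 0, 0, 0, 0, 0, 0, 0;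
    0, 0, 0, 0, 0, 1, 0, 0, 0, 0, 0, 0, 0, 0, 0, 0, 0, 0, 0, 0, 0, 0;
    0, 0, 0, 0, 0, 0, 1, -1, 0, 0, 0, 0, 0, 0, 0, 0, 0, 0, 0, 0, 0, 0;
    0, 0, 0, 0, 0, 0, 1, 1, 0, -1, 0, 0, 0, 0, 0, 0, 0, 0, 0, 0, 0, 0;
    0, 0, 0, 0, 0, 0, 1, 2, 0, -2, 0, 1, 0, 0, 0, 0, 0, 0, 0, 0, 0, 0;
    0, 0, 0, 0, 0, 0, 2, 1, 0, -2, 1, 0, 0, 0, 0, 0, 0, 0, 0, 0, 0, 0;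
    0, 0, 0, 0, 0, 0, 3, 0, 0, -1, 0, 0, 0, 0, 0, 0, 0, 0, 0, 0, 0, 0;
    0, 0, 0, 0, 0, 0, 1, 1, 0, -1, 0, 0, 0, 1, 0, 0, 0, 0, 0, 0, 0, 0;
    0, 0, 0, 0, 0, 0, 0, 0, 0, 0, 0, 0, 0, 0, 1, 0, 0, 0, 0, 0, 0, 0;
    0, 0, 0, 0, 0, 0, 0, 0, 0, 0, 0, 0, 0, 0, 0, 1, 0, 0, 0, 0, 0, 0;
    0, 0, 0, 0, 0, 0, 0, 0, 0, 0, 0, 0, 0, 0, 0, 0, 1, 0, 0, 0, 0, 0;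
    0, 0, 0, 0, 0, 0, 0, 0, 0, 0, 0, 0, 0, 0, 0, 0, 0, 1, 0, 0, 0, 0;
    0, 0, 0, 0, 0, 0, 0, 0, 0, 0, 0, 0, 0, 0, 0, 0, 0, 0, 1, 0, 0, 0;
    0, 0, 0, 0, 0, 0, 0, 0, 0, 0, 0, 0, 0, 0, 0, 0, 0, 0, 0, 1, 0, 0;
    0, 0, 0, 0, 0, 0, 0, 0, 0, 0, 0, 0, 0, 0, 0, 0, 0, 0, 0, 0, 1, 0;
    0, 0, 0, 0, 0, 0, 0, 0, 0, 0, 0, 0, 0, 0, 0, 0, 0, 0, 0, 0, 0, 1]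

def Tmat : Matrix (Fin 22) (Fin 6) ℤ :=
  !![0, 1, 0, 0, 0, 0;
    1, 0, 0, 0, 0, 0;
    0, 0, 0, 0, 0, 1;
    0, 0, 0, 1, 0, 0;
    0, 0, 0, 0, 0, 0;
    0, 0, 0, 0, 0, 0;
    0, 0, 0, 0, 0, 0;
    0, 0, 0, 0, 0, 0;
    0, 0, 0, 0, 1, 0;
    0, 0, 0, 0, 0, 0;
    0, 0, 0, 0, 0, 0;
    0, 0, 0, 0, 0, 0;
    0, 0, 1, 0, 0, 0;
    0, 0, 0, 0, 0, 0;
    0, 0, 0, 0, 0, 0;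
    0, 0, 0, 0, 0, 0;
    0, 0, 0, 0, 0, 0;
    0, 0, 0, 0, 0, 0;
    0, 0, 0, 0, 0, 0;
    0, 0, 0, 0, 0, 0;
    0, 0, 0, 0, 0, 0;
    0, 0, 0, 0, 0, 0]

def Bmat : Matrix (Fin 6) (Fin 22) ℤ :=
  !![0, 1, 0, 0, 0, 0, 0, 0, 0, 0, 0, 0, 0, 0, 0, 0, 0, 0, 0, 0, 0, 0;
    1, 0, 0, 0, 0, 0, 0, 0, 0, 0, 0, 0, 0, 0, 0, 0, 0, 0, 0, 0, 0, 0;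
    0, 0, 0, 0, 0, 0, -1, 2, 0, -1, 0, 0, 1, 0, 0, 0, 0, 0, 0, 0, 0, 0;
    0, 0, 0, 1, 0, 0, 0, 0, 0, 0, 0, 0, 0, 0, 0, 0, 0, 0, 0, 0, 0, 0;
    0, 0, 0, 0, 0, 0, -2, 0, 1, 0, 0, 0, 0, 0, 0, 0, 0, 0, 0, 0, 0, 0;
    0, 0, 1, 0, 0, 0, 0, 0, 0, 0, 0, 0, 0, 0, 0, 0, 0, 0, 0, 0, 0, 0]

def Ymat : Matrix (Fin 6) (Fin 6) ℤ :=
  !![1, 0, 0, 0, 0, 0;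
    0, 1, 0, 0, 0, 0;
    0, 0, 0, 0, 1, 1;
    0, 0, 1, 0, 0, 0;
    0, 0, 0, 0, 0, 1;
    0, 0, 0, 1, 0, 0]


lemma gram_eq {a b c : ℕ} (P : Matrix (Fin a) (Fin b) ℤ) (Q : Matrix (Fin a) (Fin c) ℤ)
    (Gm : Matrix (Fin a) (Fin a) ℤ) (x : Fin b → ℤ) (y : Fin c → ℤ) :
    (P *ᵥ x) ⬝ᵥ (Gm *ᵥ (Q *ᵥ y)) = x ⬝ᵥ ((Pᵀ * Gm * Q) *ᵥ y) := by
  rw [Matrix.mulVec_mulVec, ← Matrix.vecMul_transpose, Matrix.dotProduct_mulVec,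
    Matrix.vecMul_vecMul, Matrix.dotProduct_mulVec, Matrix.mul_assoc]

/-- There is a primitive embedding of U ⊕ U ⊕ C₈⁶ into the K3 lattice whose orthogonal complement is isometric to U ⊕ A₆ ⊕ E₈. -/
theorem primitive_embedding_UUC86_K3 :
    ∃ ι : (Fin 6 → ℤ) →ₗ[ℤ] (Fin 22 → ℤ),
      -- ι is an embedding of the lattice (U ⊕ U ⊕ C₈⁶) into (Λ_K3) ...
      Function.Injective ι ∧
      (∀ x y : Fin 6 → ℤ, ι x ⬝ᵥ (LambdaK3 *ᵥ ι y) = x ⬝ᵥ (UUC86 *ᵥ y)) ∧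
      -- ... which is primitive (its image is saturated, i.e. the cokernel is torsion-free) ...
      (∀ (v : Fin 22 → ℤ) (k : ℤ), k ≠ 0 → k • v ∈ LinearMap.range ι → v ∈ LinearMap.range ι) ∧
      -- ... and the orthogonal complement of the image of ι, with the restricted form,
      -- is isometric to (U ⊕ A₆ ⊕ E₈): there is an injective linear map j preserving the forms
      -- whose range is exactly the orthogonal complement of the image of ι.
      ∃ j : (Fin 16 → ℤ) →ₗ[ℤ] (Fin 22 → ℤ),
        Function.Injective j ∧
        (∀ x y : Fin 16 → ℤ, j x ⬝ᵥ (LambdaK3 *ᵥ j y) = x ⬝ᵥ (UA6E8 *ᵥ y)) ∧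
        (∀ v : Fin 22 → ℤ, v ∈ LinearMap.range j ↔ ∀ x : Fin 6 → ℤ, v ⬝ᵥ (LambdaK3 *ᵥ ι x) = 0) := by
  have hLM : Lmat * Mmat = 1 := by decide
  have hAN : Amat * Nmat = 1 := by decide
  have hMGM : Mmatᵀ * LambdaK3 * Mmat = UUC86 := by decide
  have hNGN : Nmatᵀ * LambdaK3 * Nmat = UA6E8 := by decide
  have hNGM : Nmatᵀ * LambdaK3 * Mmat = 0 := by decide
  have hMGN : Mmatᵀ * LambdaK3 * Nmat = 0 := by decide
  have hsplit : Nmat * Amat + Tmat * Bmat = 1 := by decide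
  have hY : Ymat * (Mmatᵀ * LambdaK3 * Tmat) = 1 := by decide
  have hGsym : LambdaK3ᵀ = LambdaK3 := by decide
  refine ⟨Matrix.mulVecLin Mmat, ?_, ?_, ?_, Matrix.mulVecLin Nmat, ?_, ?_, ?_⟩
  · intro x y h
    simp only [Matrix.mulVecLin_apply] at h
    have := congrArg (fun w => Lmat *ᵥ w) h
    simpa [Matrix.mulVec_mulVec, hLM] using this
  · intro x y
    simp only [Matrix.mulVecLin_apply, gram_eq, hMGM]
  · rintro v k hk ⟨x, hx⟩
    simp only [Matrix.mulVecLin_apply] at hx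
    refine ⟨Lmat *ᵥ v, ?_⟩
    simp only [Matrix.mulVecLin_apply]
    apply smul_right_injective (Fin 22 → ℤ) hk
    calc k • (Mmat *ᵥ (Lmat *ᵥ v)) = Mmat *ᵥ (Lmat *ᵥ (k • v)) := by
            rw [Matrix.mulVec_smul, Matrix.mulVec_smul]
      _ = Mmat *ᵥ (Lmat *ᵥ (Mmat *ᵥ x)) := by rw [hx]
      _ = Mmat *ᵥ x := by
            simp only [Matrix.mulVec_mulVec, Matrix.mul_assoc, hLM, Matrix.mul_one]
      _ = k • v := hx
  · intro x y h
    simp only [Matrix.mulVecLin_apply] at h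
    have := congrArg (fun w => Amat *ᵥ w) h
    simpa [Matrix.mulVec_mulVec, hAN] using this
  · intro x y
    simp only [Matrix.mulVecLin_apply, gram_eq, hNGN]
  · intro v
    constructor
    · rintro ⟨u, rfl⟩ x
      simp only [Matrix.mulVecLin_apply, gram_eq, hNGM]
      simp
    · intro hv
      have hw : (Mmatᵀ * LambdaK3) *ᵥ v = 0 := by
        funext i
        have h1 := hv (Pi.single i 1)
        simp only [Matrix.mulVecLin_apply, Matrix.mulVec_mulVec] at h1
        rw [Matrix.dotProduct_mulVec,
          show LambdaK3 * Mmat = (Mmatᵀ * LambdaK3)ᵀ from by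
            rw [Matrix.transpose_mul, Matrix.transpose_transpose, hGsym],
          Matrix.vecMul_transpose] at h1
        simpa using h1
      have hb : Bmat *ᵥ v = 0 := by
        have h3 : ((Mmatᵀ * LambdaK3 * Tmat) * Bmat) *ᵥ v = 0 := by
          have h4 : (Mmatᵀ * LambdaK3 * (Nmat * Amat + Tmat * Bmat)) *ᵥ v = 0 := by
            rw [hsplit, Matrix.mul_one, hw]
          rw [Matrix.mul_add, ← Matrix.mul_assoc, ← Matrix.mul_assoc, hMGN,
            Matrix.zero_mul, zero_add] at h4
          exact h4
        have h5 : (Ymat * ((Mmatᵀ * LambdaK3 * Tmat) * Bmat)) *ᵥ v = 0 := by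
          rw [← Matrix.mulVec_mulVec, h3, Matrix.mulVec_zero]
        rwa [← Matrix.mul_assoc, hY, Matrix.one_mul] at h5
      refine ⟨Amat *ᵥ v, ?_⟩
      simp only [Matrix.mulVecLin_apply]
      have h5 : (Nmat * Amat + Tmat * Bmat) *ᵥ v = v := by rw [hsplit, Matrix.one_mulVec]
      rw [Matrix.add_mulVec, ← Matrix.mulVec_mulVec, ← Matrix.mulVec_mulVec, hb,
        Matrix.mulVec_zero, add_zero] at h5
      exact h5
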